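/- arXiv:1511.07769 — 2 statements merged into one kernel-verified Lean document; each statement's English description precedes it below -/
import Mathlib

section
/- With X = A × B × I and σ as in the construction, the maps σ satisfy σ_{(a,b,i)} ∘ σ_{σ^{-1}_{(a,b,i)}(c,d,j)} = σ_{(c,d,j)} ∘ σ_{σ^{-1}_{(c,d,j)}(a,b,i)} for all a,c ∈ A, b,d ∈ B, i,j ∈ I. Consequently the map r: X² → X² defined by r((a,b,i),(c,d,j)) = (σ_{(a,b,i)}(c,d,j), σ^{-1}_{σ_{(a,b,i)}(c,d,j)}(a,b,i)) is an involutive non-degenerate set-theoretic solution of the Yang-Baxter equation. -/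
/-!
For any family of permutations `σ_x` of a set `X`, the map `r(x,y) = (σ_x y, σ_{σ_x y}⁻¹ x)` is
involutive, and it satisfies the braid relation as soon as `σ_x σ_{σ_x⁻¹ y}` is symmetric in `x`
and `y`: each of the three coordinates of the braid relation is one instance of that identity
(the third in inverted form). For the `σ` of the construction the identity is checked by cases on
which of the indices `i, j, k` coincide; evenness of `φ₁` is needed exactly when `i = j ≠ k`.
Right non-degeneracy comes from `σ_{σ_p q}⁻¹ p = σ_q⁻¹ p`.
-/

/-- The map `σ_{(a,b,i)}` of the main construction:
`σ_{(a,b,i)}(c,d,j) = (c, d + φ₁(a−c), j)` if `i = j`, and `(c + φ₂(b), d, j)` if `i ≠ j`. -/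
def sigmaMap {A B I : Type*} [AddCommGroup A] [AddCommGroup B] [DecidableEq I]
    (φ₁ : A → B) (φ₂ : B →+ A) (p q : A × B × I) : A × B × I :=
  if p.2.2 = q.2.2 then (q.1, q.2.1 + φ₁ (p.1 - q.1), q.2.2)
  else (q.1 + φ₂ p.2.1, q.2.1, q.2.2)

/-- The claimed inverse of `σ_{(a,b,i)}`:
`(c,d,j) ↦ (c, d − φ₁(a−c), j)` if `i = j`, and `(c − φ₂(b), d, j)` if `i ≠ j`. -/
def sigmaInvMap {A B I : Type*} [AddCommGroup A] [AddCommGroup B] [DecidableEq I]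
    (φ₁ : A → B) (φ₂ : B →+ A) (p q : A × B × I) : A × B × I :=
  if p.2.2 = q.2.2 then (q.1, q.2.1 - φ₁ (p.1 - q.1), q.2.2)
  else (q.1 - φ₂ p.2.1, q.2.1, q.2.2)

/-- `r` acting on coordinates 1,2 of a triple. -/
def rTwelve {X : Type*} (r : X × X → X × X) : X × X × X → X × X × X :=
  fun p => ((r (p.1, p.2.1)).1, (r (p.1, p.2.1)).2, p.2.2)

/-- `r` acting on coordinates 2,3 of a triple. -/
def rTwentyThree {X : Type*} (r : X × X → X × X) : X × X × X → X × X × X :=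
  fun p => (p.1, r p.2)

section PermSolution

variable {X : Type*} (σ : X → Equiv.Perm X)

def permSolution (z : X × X) : X × X :=
  (σ z.1 z.2, (σ (σ z.1 z.2)).symm z.1)

theorem permSolution_involutive : Function.Involutive (permSolution σ) := by
  rintro ⟨x, y⟩
  simp [permSolution]

theorem permSolution_braid
    (hσ : ∀ x y, σ x * σ ((σ x).symm y) = σ y * σ ((σ y).symm x)) (w : X × X × X) :
    rTwelve (permSolution σ) (rTwentyThree (permSolution σ) (rTwelve (permSolution σ) w)) =
      rTwentyThree (permSolution σ) (rTwelve (permSolution σ) (rTwentyThree (permSolution σ) w)) := by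
  have hσ_apply : ∀ x y z, σ x (σ ((σ x).symm y) z) = σ y (σ ((σ y).symm x) z) :=
    fun x y z => by simpa using DFunLike.congr_fun (hσ x y) z
  have hσ_symm_apply : ∀ x y z,
      (σ ((σ x).symm y)).symm ((σ x).symm z) = (σ ((σ y).symm x)).symm ((σ y).symm z) :=
    fun x y z => by
      simpa [Equiv.Perm.inv_def] using DFunLike.congr_fun (congrArg (·⁻¹) (hσ x y)) z
  obtain ⟨x, y, z⟩ := w
  simp only [rTwelve, rTwentyThree, permSolution, Prod.mk.injEq]
  set m := σ x y
  set u := σ x (σ y z)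
  have hfirst : σ m (σ ((σ m).symm x) z) = u := by
    rw [hσ_apply m x, Equiv.symm_apply_apply]
  have hsecond : (σ u).symm m = σ ((σ u).symm x) ((σ (σ y z)).symm y) := by
    apply (σ u).injective
    rw [hσ_apply u x, Equiv.apply_symm_apply, Equiv.symm_apply_apply, Equiv.apply_symm_apply]
  have hfirst_symm : σ ((σ m).symm x) z = (σ m).symm u := by
    rw [← hfirst, Equiv.symm_apply_apply]
  rw [hfirst, ← hsecond, hfirst_symm, hσ_symm_apply]
  exact ⟨rfl, rfl, rfl⟩

end PermSolution

section Construction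

variable {A B I : Type*} [AddCommGroup A] [AddCommGroup B] [DecidableEq I]
  (φ₁ : A → B) (φ₂ : B →+ A)

theorem sigmaInvMap_sigmaMap (p q : A × B × I) :
    sigmaInvMap φ₁ φ₂ p (sigmaMap φ₁ φ₂ p q) = q := by
  obtain ⟨a, b, i⟩ := p; obtain ⟨c, d, j⟩ := q
  by_cases h : i = j <;> simp [sigmaMap, sigmaInvMap, h]

theorem sigmaMap_sigmaInvMap (p q : A × B × I) :
    sigmaMap φ₁ φ₂ p (sigmaInvMap φ₁ φ₂ p q) = q := by
  obtain ⟨a, b, i⟩ := p; obtain ⟨c, d, j⟩ := q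
  by_cases h : i = j <;> simp [sigmaMap, sigmaInvMap, h]

def sigmaPerm (p : A × B × I) : Equiv.Perm (A × B × I) where
  toFun := sigmaMap φ₁ φ₂ p
  invFun := sigmaInvMap φ₁ φ₂ p
  left_inv := sigmaInvMap_sigmaMap φ₁ φ₂ p
  right_inv := sigmaMap_sigmaInvMap φ₁ φ₂ p

theorem sigmaInvMap_sigmaMap_self (p q : A × B × I) :
    sigmaInvMap φ₁ φ₂ (sigmaMap φ₁ φ₂ p q) p = sigmaInvMap φ₁ φ₂ q p := by
  obtain ⟨a, b, i⟩ := p; obtain ⟨c, d, j⟩ := q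
  by_cases h : i = j <;> simp [sigmaMap, sigmaInvMap, h, eq_comm]

theorem sigmaMap_comp_sigmaMap_sigmaInvMap_comm (hφ₁ : ∀ a, φ₁ (-a) = φ₁ a) (p q : A × B × I) :
    sigmaMap φ₁ φ₂ p ∘ sigmaMap φ₁ φ₂ (sigmaInvMap φ₁ φ₂ p q) =
      sigmaMap φ₁ φ₂ q ∘ sigmaMap φ₁ φ₂ (sigmaInvMap φ₁ φ₂ q p) := by
  have hφ₁_sub : ∀ a c : A, φ₁ (a - c) = φ₁ (c - a) := fun a c => by rw [← neg_sub, hφ₁]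
  obtain ⟨a, b, i⟩ := p; obtain ⟨c, d, j⟩ := q
  funext ⟨e, f, k⟩
  rcases eq_or_ne i j with rfl | hij
  · rcases eq_or_ne i k with rfl | hik
    · simp only [sigmaMap, sigmaInvMap, Function.comp_apply, if_true]
      rw [add_right_comm]
    · simp [sigmaMap, sigmaInvMap, hik, hφ₁_sub c a]
      abel
  · rcases eq_or_ne i k with rfl | hik
    · simp [sigmaMap, sigmaInvMap, hij, hij.symm, sub_sub, add_comm]
    · rcases eq_or_ne j k with rfl | hjk
      · simp [sigmaMap, sigmaInvMap, hij, hij.symm, sub_sub, add_comm]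
      · simp [sigmaMap, sigmaInvMap, hij, hij.symm, hik, hjk, add_right_comm]

end Construction

theorem stmt8_general {A B I : Type*} [AddCommGroup A] [AddCommGroup B] [DecidableEq I]
    (φ₁ : A → B) (hφ₁ : ∀ a : A, φ₁ (-a) = φ₁ a) (φ₂ : B →+ A)
    (r : (A × B × I) × (A × B × I) → (A × B × I) × (A × B × I))
    (hr : ∀ p q : A × B × I,
      r (p, q) = (sigmaMap φ₁ φ₂ p q, sigmaInvMap φ₁ φ₂ (sigmaMap φ₁ φ₂ p q) p)) :
    (∀ p q : A × B × I,
      sigmaMap φ₁ φ₂ p ∘ sigmaMap φ₁ φ₂ (sigmaInvMap φ₁ φ₂ p q) =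
      sigmaMap φ₁ φ₂ q ∘ sigmaMap φ₁ φ₂ (sigmaInvMap φ₁ φ₂ q p)) ∧
    (∀ z : (A × B × I) × (A × B × I), r (r z) = z) ∧
    (∀ p : A × B × I, Function.Bijective (sigmaMap φ₁ φ₂ p)) ∧
    (∀ q : A × B × I,
      Function.Bijective (fun p => sigmaInvMap φ₁ φ₂ (sigmaMap φ₁ φ₂ p q) p)) ∧
    (∀ z : (A × B × I) × (A × B × I) × (A × B × I),
      rTwelve r (rTwentyThree r (rTwelve r z)) = rTwentyThree r (rTwelve r (rTwentyThree r z))) := by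
  have hcomm := sigmaMap_comp_sigmaMap_sigmaInvMap_comm (I := I) φ₁ φ₂ hφ₁
  obtain rfl : r = permSolution (sigmaPerm φ₁ φ₂) := funext fun z => hr z.1 z.2
  refine ⟨hcomm, permSolution_involutive _, fun p => (sigmaPerm φ₁ φ₂ p).bijective,
    fun q => ?_, permSolution_braid _ fun p q => Equiv.ext (congrFun (hcomm p q))⟩
  simp only [sigmaInvMap_sigmaMap_self]
  exact (sigmaPerm φ₁ φ₂ q).symm.bijective

/-- `σ_p ∘ σ_{σ⁻¹_p(q)} = σ_q ∘ σ_{σ⁻¹_q(p)}`, and consequently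
`r(x,y) = (σ_x(y), σ⁻¹_{σ_x(y)}(x))` is an involutive non-degenerate set-theoretic
solution of the Yang–Baxter equation. -/
theorem stmt8 {A B I : Type*} [AddCommGroup A] [AddCommGroup B] [DecidableEq I]
    [Nontrivial A] [Nontrivial B] [Nontrivial I]
    (φ₁ : A → B) (hφ₁ : ∀ a : A, φ₁ (-a) = φ₁ a) (φ₂ : B →+ A)
    (r : (A × B × I) × (A × B × I) → (A × B × I) × (A × B × I))
    (hr : ∀ p q : A × B × I,
      r (p, q) = (sigmaMap φ₁ φ₂ p q, sigmaInvMap φ₁ φ₂ (sigmaMap φ₁ φ₂ p q) p)) :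
    (∀ p q : A × B × I,
      sigmaMap φ₁ φ₂ p ∘ sigmaMap φ₁ φ₂ (sigmaInvMap φ₁ φ₂ p q) =
      sigmaMap φ₁ φ₂ q ∘ sigmaMap φ₁ φ₂ (sigmaInvMap φ₁ φ₂ q p)) ∧
    (∀ z : (A × B × I) × (A × B × I), r (r z) = z) ∧
    (∀ p : A × B × I, Function.Bijective (sigmaMap φ₁ φ₂ p)) ∧
    (∀ q : A × B × I,
      Function.Bijective (fun p => sigmaInvMap φ₁ φ₂ (sigmaMap φ₁ φ₂ p q) p)) ∧
    (∀ z : (A × B × I) × (A × B × I) × (A × B × I),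
      rTwelve r (rTwentyThree r (rTwelve r z)) = rTwentyThree r (rTwelve r (rTwentyThree r z))) :=
  stmt8_general φ₁ hφ₁ φ₂ r hr
end

section
/- Let (X,r) be a solution of the YBE with orbits {X_i}_{i∈I} (I well-ordered) and G_i the subgroup of the structure group generated by X_i. Then H = { g₁⋯g_n : g_l ∈ G_{i_l}, i₁ < ⋯ < i_n in I, deg(g_l) = 0 } is an ideal of the left brace G(X,r), i.e. a normal subgroup of the multiplicative group invariant under all λ_g. -/
/-!
Write `λ_g(h) = g * h - g`. The identities `λ_g(a * b) = λ_g(a) * λ_k(b)` and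
`λ_g(a⁻¹) = (λ_k(a))⁻¹` (for suitable `k`) make every statement of the form
"`λ_g(h)` lies in a subgroup for all `g`" closed under products and inverses, so it only has to be
checked on generators. This shows that the orbit subgroups `G_x = ⟨λ_g(x)⟩`, the degree and hence
`H` are `λ`-invariant. Normality then follows from `g * h * g⁻¹ = λ_g(h) * (λ_k(g) * g⁻¹)`:
for `g ∈ G_x` the second factor is a degree-zero element of `G_x`, so conjugation by the
generators `x` and `x⁻¹` preserves `H`.
-/

class LeftBrace (B : Type*) extends AddCommGroup B, Group B where
  mul_add_distrib : ∀ a b c : B, a * (b + c) + a = a * b + a * c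

theorem Subgroup.coe_closure_eq_image_prod_of_inv_subset {G : Type*} [Group G] {s : Set G}
    (hs : s⁻¹ ⊆ s) : (Subgroup.closure s : Set G) = List.prod '' {l | ∀ x ∈ l, x ∈ s} := by
  rw [← Subgroup.coe_toSubmonoid, Subgroup.closure_toSubmonoid, Set.union_eq_left.2 hs,
    Submonoid.closure_eq_image_prod]

namespace LeftBrace

variable {G : Type*} [LeftBrace G]

def lam (g a : G) : G := g * a - g

theorem one_eq_zero : (1 : G) = 0 := by
  simpa using mul_add_distrib (1 : G) 0 0

theorem mul_eq_add_lam (g a : G) : g * a = g + lam g a := by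
  simp [lam]

theorem lam_add (g a b : G) : lam g (a + b) = lam g a + lam g b := by
  have h := eq_sub_of_add_eq (mul_add_distrib g a b)
  simp only [lam, h]
  abel

theorem lam_one (g : G) : lam g (1 : G) = 1 := by
  rw [lam, mul_one, sub_self, one_eq_zero]

theorem one_lam (a : G) : lam (1 : G) a = a := by
  rw [lam, one_mul, one_eq_zero, sub_zero]

theorem lam_lam (g h a : G) : lam g (lam h a) = lam (g * h) a := by
  have h1 := lam_add g (h * a - h) h
  rw [sub_add_cancel] at h1
  change lam g (h * a - h) = lam (g * h) a
  rw [eq_sub_of_add_eq h1.symm]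
  simp only [lam, mul_assoc]
  abel

theorem add_eq_mul_lam (a b : G) : a + b = a * lam a⁻¹ b := by
  rw [mul_eq_add_lam, lam_lam, mul_inv_cancel, one_lam]

theorem mul_eq_lam_mul_lam (g a : G) : g * a = lam g a * lam (lam g a)⁻¹ g := by
  rw [mul_eq_add_lam, add_comm, add_eq_mul_lam]

theorem lam_mul (g a b : G) :
    lam g (a * b) = lam g a * lam ((lam g a)⁻¹ * (g * a)) b := by
  rw [mul_eq_add_lam a b, lam_add, lam_lam, add_eq_mul_lam, lam_lam]

theorem lam_inv (g a : G) : lam g a⁻¹ = (lam ((lam g a⁻¹)⁻¹ * (g * a⁻¹)) a)⁻¹ := by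
  refine eq_inv_of_mul_eq_one_left ?_
  rw [← lam_mul, inv_mul_cancel, lam_one]

theorem lam_mem_closure {s : Set G} (hs : ∀ g, ∀ a ∈ s, lam g a ∈ Subgroup.closure s)
    {h : G} (hh : h ∈ Subgroup.closure s) (g : G) : lam g h ∈ Subgroup.closure s := by
  induction hh using Subgroup.closure_induction generalizing g with
  | mem a ha => exact hs g a ha
  | one => rw [lam_one]; exact one_mem _
  | mul a b _ _ iha ihb => rw [lam_mul]; exact mul_mem (iha g) (ihb _)
  | inv a _ iha => rw [lam_inv]; exact inv_mem (iha _)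

theorem conj_mem_of_lam_mul_inv_mem {K : Subgroup G} (hK : ∀ g, ∀ h ∈ K, lam g h ∈ K)
    {g : G} (hg : ∀ k, lam k g * g⁻¹ ∈ K) {h : G} (hh : h ∈ K) : g * h * g⁻¹ ∈ K := by
  rw [mul_eq_lam_mul_lam g h, mul_assoc]
  exact mul_mem (hK g h hh) (hg _)

theorem deg_one {d : G → ℤ} (hd : ∀ g h, d (g * h) = d g + d h) : d 1 = 0 := by
  simpa using hd 1 1

theorem deg_inv {d : G → ℤ} (hd : ∀ g h, d (g * h) = d g + d h) (a : G) : d a⁻¹ = -d a := by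
  have := hd a a⁻¹
  rw [mul_inv_cancel, deg_one hd] at this
  omega

theorem deg_lam {X : Set G} (hgen : Subgroup.closure X = ⊤)
    (hlamX : ∀ g, ∀ x ∈ X, g * x - g ∈ X) {d : G → ℤ} (hd : ∀ g h, d (g * h) = d g + d h)
    (hdX : ∀ x ∈ X, d x = 1) (g h : G) : d (lam g h) = d h := by
  have hh : h ∈ Subgroup.closure X := hgen ▸ Subgroup.mem_top h
  induction hh using Subgroup.closure_induction generalizing g with
  | mem x hx => rw [hdX x hx]; exact hdX _ (hlamX g x hx)
  | one => rw [lam_one]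
  | mul a b _ _ iha ihb => rw [lam_mul, hd, hd, iha, ihb]
  | inv a _ iha => rw [lam_inv, deg_inv hd, deg_inv hd, iha]

def orbitSubgroup (x : G) : Subgroup G := Subgroup.closure {y | ∃ k, lam k x = y}

theorem self_mem_orbitSubgroup (x : G) : x ∈ orbitSubgroup x :=
  Subgroup.subset_closure ⟨1, one_lam x⟩

theorem lam_mem_orbitSubgroup {x h : G} (hh : h ∈ orbitSubgroup x) (g : G) :
    lam g h ∈ orbitSubgroup x := by
  refine lam_mem_closure (fun g a ha => ?_) hh g
  obtain ⟨k, rfl⟩ := ha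
  exact Subgroup.subset_closure ⟨g * k, (lam_lam g k x).symm⟩

variable {X : Set G} {d : G → ℤ}

def orbitIdeal (X : Set G) (d : G → ℤ) : Subgroup G :=
  Subgroup.closure {g | d g = 0 ∧ ∃ x ∈ X, g ∈ orbitSubgroup x}

theorem coe_orbitIdeal (hd : ∀ g h, d (g * h) = d g + d h) :
    (orbitIdeal X d : Set G) =
      {h | ∃ l : List G, h = l.prod ∧ ∀ g ∈ l, d g = 0 ∧ ∃ x ∈ X, g ∈ orbitSubgroup x} := by
  rw [orbitIdeal, Subgroup.coe_closure_eq_image_prod_of_inv_subset]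
  · ext h
    exact exists_congr fun l => and_comm.trans (and_congr_left' eq_comm)
  · rintro g ⟨hg, x, hx, hgx⟩
    exact ⟨by rw [← inv_inv g, deg_inv hd, hg, neg_zero], x, hx, by simpa using inv_mem hgx⟩

theorem lam_mem_orbitIdeal (hdeg : ∀ g h, d (lam g h) = d h) {h : G} (hh : h ∈ orbitIdeal X d)
    (g : G) : lam g h ∈ orbitIdeal X d := by
  refine lam_mem_closure (fun g a ha => ?_) hh g
  obtain ⟨ha0, x, hx, hax⟩ := ha
  exact Subgroup.subset_closure ⟨by rw [hdeg, ha0], x, hx, lam_mem_orbitSubgroup hax g⟩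

theorem lam_mul_inv_mem_orbitIdeal (hd : ∀ g h, d (g * h) = d g + d h)
    (hdeg : ∀ g h, d (lam g h) = d h) {x g : G} (hx : x ∈ X) (hg : g ∈ orbitSubgroup x) (k : G) :
    lam k g * g⁻¹ ∈ orbitIdeal X d :=
  Subgroup.subset_closure ⟨by rw [hd, hdeg, deg_inv hd, add_neg_cancel], x, hx,
    mul_mem (lam_mem_orbitSubgroup hg k) (inv_mem hg)⟩

theorem conj_mem_orbitIdeal (hd : ∀ g h, d (g * h) = d g + d h)
    (hdeg : ∀ g h, d (lam g h) = d h) {x g h : G} (hx : x ∈ X) (hg : g ∈ orbitSubgroup x)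
    (hh : h ∈ orbitIdeal X d) : g * h * g⁻¹ ∈ orbitIdeal X d :=
  conj_mem_of_lam_mul_inv_mem (fun k _ hh => lam_mem_orbitIdeal hdeg hh k)
    (lam_mul_inv_mem_orbitIdeal hd hdeg hx hg) hh

theorem orbitIdeal_normal (hgen : Subgroup.closure X = ⊤) (hd : ∀ g h, d (g * h) = d g + d h)
    (hdeg : ∀ g h, d (lam g h) = d h) : (orbitIdeal X d).Normal := by
  rw [← Subgroup.normalizer_eq_top_iff, eq_top_iff, ← hgen, Subgroup.closure_le]
  intro x hx
  rw [SetLike.mem_coe, Subgroup.mem_normalizer_iff]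
  have hx' := self_mem_orbitSubgroup x
  refine fun h => ⟨conj_mem_orbitIdeal hd hdeg hx hx', fun hh => ?_⟩
  simpa [mul_assoc] using conj_mem_orbitIdeal hd hdeg hx (inv_mem hx') hh

end LeftBrace

open LeftBrace in
theorem stmt17_general {G : Type*} [LeftBrace G] (X : Set G)
    (hgen : Subgroup.closure X = (⊤ : Subgroup G))
    (hlamX : ∀ g : G, ∀ x ∈ X, g * x - g ∈ X)
    (d : G → ℤ)
    (hd : ∀ g h : G, d (g * h) = d g + d h)
    (hdX : ∀ x ∈ X, d x = 1)
    (H : Set G)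
    (hH : H = {h : G | ∃ l : List G, h = l.prod ∧ ∀ g ∈ l,
      d g = 0 ∧ ∃ x ∈ X, g ∈ Subgroup.closure {y : G | ∃ k : G, k * x - k = y}}) :
    ((1 : G) ∈ H) ∧
    (∀ a ∈ H, ∀ b ∈ H, a * b ∈ H) ∧
    (∀ a ∈ H, a⁻¹ ∈ H) ∧
    (∀ g : G, ∀ a ∈ H, g * a * g⁻¹ ∈ H) ∧
    (∀ g : G, ∀ a ∈ H, g * a - g ∈ H) := by
  have hHK : H = orbitIdeal X d := hH.trans (coe_orbitIdeal hd).symm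
  have hdeg := deg_lam hgen hlamX hd hdX
  have hnormal := orbitIdeal_normal hgen hd hdeg
  subst hHK
  exact ⟨one_mem _, fun _ ha _ hb => mul_mem ha hb, fun _ ha => inv_mem ha,
    fun g a ha => hnormal.conj_mem a ha g, fun g _ ha => lam_mem_orbitIdeal hdeg ha g⟩

/-- Setting: `G` is the structure group of a solution `(X,r)` viewed as a left brace whose
additive group is free abelian with basis `X`, with `λ_g(X) ⊆ X` (`λ_g(h) = g·h − g`),
equipped with the degree function `d` (`d(g·h) = d(g)+d(h)`, `d(x) = 1` on `X`).
The set `H` of products of degree-zero elements of the orbit subgroups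
`G_i = ⟨{λ_g(x) : g ∈ G}⟩` is an ideal of the left brace `G`: a normal subgroup of the
multiplicative group that is invariant under all `λ_g`. -/
theorem stmt17 {G : Type*} [LeftBrace G] (X : Set G)
    (hgen : Subgroup.closure X = (⊤ : Subgroup G))
    (hbasis : ∀ g : G, ∃! f : X →₀ ℤ, g = f.sum fun x n => n • (x : G))
    (hlamX : ∀ g : G, ∀ x ∈ X, g * x - g ∈ X)
    (d : G → ℤ)
    (hd : ∀ g h : G, d (g * h) = d g + d h)
    (hdX : ∀ x ∈ X, d x = 1)
    (H : Set G)
    (hH : H = {h : G | ∃ l : List G, h = l.prod ∧ ∀ g ∈ l,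
      d g = 0 ∧ ∃ x ∈ X, g ∈ Subgroup.closure {y : G | ∃ k : G, k * x - k = y}}) :
    ((1 : G) ∈ H) ∧
    (∀ a ∈ H, ∀ b ∈ H, a * b ∈ H) ∧
    (∀ a ∈ H, a⁻¹ ∈ H) ∧
    (∀ g : G, ∀ a ∈ H, g * a * g⁻¹ ∈ H) ∧
    (∀ g : G, ∀ a ∈ H, g * a - g ∈ H) :=
  stmt17_general X hgen hlamX d hd hdX H hH
end
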